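/- arXiv:2301.00467 — 3 statements merged into one kernel-verified Lean document; each statement's English description precedes it below -/
import Mathlib

section
/- Let Φ : [0,∞) → [0,∞) be continuous, increasing, with Φ(0)=0, such that t ↦ Φ(√t) is convex. Then for all real numbers u, v: (1/2)[Φ(|u|) + Φ(|v|)] ≥ Φ(|u+v|/2) + Φ(|u−v|/2). -/
/-!
Put `g t = Φ (√t)`, so that `Φ |w| = g (w ^ 2)`. By the parallelogram identity
`((u + v) / 2) ^ 2 + ((u - v) / 2) ^ 2 = (u ^ 2 + v ^ 2) / 2`, the claim follows from two
consequences of the convexity of `g` on `[0, ∞)`: superadditivity (as `g 0 = 0`), applied to the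
two squares on the left, and midpoint convexity, applied to `u ^ 2` and `v ^ 2`.
-/

open Set

section

variable {𝕜 : Type*} [Field 𝕜] [LinearOrder 𝕜] [IsStrictOrderedRing 𝕜] {f : 𝕜 → 𝕜}

/-- Both `x` and `y` are convex combinations of `x + y` and `0`, with complementary weights. -/
theorem ConvexOn.add_le_map_add_add_map_zero (hf : ConvexOn 𝕜 (Ici 0) f) {x y : 𝕜}
    (hx : 0 ≤ x) (hy : 0 ≤ y) : f x + f y ≤ f (x + y) + f 0 := by
  rcases (add_nonneg hx hy).eq_or_lt with hxy | hxy
  · obtain ⟨rfl, rfl⟩ : x = 0 ∧ y = 0 := ⟨by linarith, by linarith⟩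
    simp
  have hcomb : ∀ a b : 𝕜, 0 ≤ a → 0 ≤ b → a + b = x + y →
      f a ≤ a / (x + y) * f (x + y) + b / (x + y) * f 0 := by
    intro a b ha hb hab
    have h := hf.2 (mem_Ici.2 hxy.le) self_mem_Ici (div_nonneg ha hxy.le) (div_nonneg hb hxy.le)
      (by rw [← add_div, hab, div_self hxy.ne'])
    simpa [div_mul_cancel₀ _ hxy.ne'] using h
  have hfx := hcomb x y hx hy rfl
  have hfy := hcomb y x hy hx (add_comm y x)
  calc f x + f y
      ≤ (x + y) / (x + y) * f (x + y) + (x + y) / (x + y) * f 0 := by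
        rw [add_div]; linarith
    _ = f (x + y) + f 0 := by rw [div_self hxy.ne', one_mul, one_mul]

theorem ConvexOn.map_add_div_two_le (hf : ConvexOn 𝕜 (Ici 0) f) {x y : 𝕜}
    (hx : 0 ≤ x) (hy : 0 ≤ y) : f ((x + y) / 2) ≤ (f x + f y) / 2 := by
  have h := hf.2 (mem_Ici.2 hx) (mem_Ici.2 hy) (by norm_num : (0 : 𝕜) ≤ 1 / 2)
    (by norm_num : (0 : 𝕜) ≤ 1 / 2) (by norm_num)
  simp only [smul_eq_mul] at h
  convert h using 2 <;> ring

end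

theorem stmt_6_general (Φ : ℝ → ℝ)
    (hΦ0 : Φ 0 = 0)
    (hconv : ConvexOn ℝ (Ici 0) (fun t => Φ (Real.sqrt t))) :
    ∀ u v : ℝ, Φ (|u + v| / 2) + Φ (|u - v| / 2) ≤ (Φ |u| + Φ |v|) / 2 := by
  intro u v
  have hΦ_abs : ∀ w : ℝ, Φ |w| = Φ (Real.sqrt (w ^ 2)) := fun w => by
    rw [Real.sqrt_sq_eq_abs]
  have hsuper := hconv.add_le_map_add_add_map_zero (sq_nonneg ((u + v) / 2))
    (sq_nonneg ((u - v) / 2))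
  have hmid := hconv.map_add_div_two_le (sq_nonneg u) (sq_nonneg v)
  have hparallelogram : ((u + v) / 2) ^ 2 + ((u - v) / 2) ^ 2 = (u ^ 2 + v ^ 2) / 2 := by ring
  simp only [hparallelogram, Real.sqrt_zero, hΦ0, add_zero] at hsuper
  rw [← abs_two, ← abs_div, ← abs_div, hΦ_abs ((u + v) / 2), hΦ_abs ((u - v) / 2), hΦ_abs u,
    hΦ_abs v]
  linarith

theorem stmt_6 (Φ : ℝ → ℝ)
    (hcont : ContinuousOn Φ (Ici 0))
    (hmono : StrictMonoOn Φ (Ici 0))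
    (hΦ0 : Φ 0 = 0)
    (hconv : ConvexOn ℝ (Ici 0) (fun t => Φ (Real.sqrt t))) :
    ∀ u v : ℝ, Φ (|u + v| / 2) + Φ (|u - v| / 2) ≤ (Φ |u| + Φ |v|) / 2 :=
  stmt_6_general Φ hΦ0 hconv
end

section
/- Fix p ≥ 2 and define φ(t) = p·t^{p−1}/log(1+t) for t > 0, φ(0)=0, and Φ(t) = ∫₀ᵗ φ(τ)dτ. Then for all t > 0, p − 1 ≤ t·φ(t)/Φ(t) ≤ p. -/
open Set intervalIntegral

/-!
The index `t φ(t) / Φ(t)` equals `p · A / Φ(t)` with `A = t^p / log (1 + t)`, so it suffices to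
show `A ≤ Φ(t) ≤ p A / (p - 1)`. Both bounds compare the integrand `p τ^(p-1) / log (1 + τ)` on
`(0, t)` with an explicit power of `τ`: from below using `log (1 + τ) ≤ log (1 + t)`, and from
above using that `log (1 + τ) / τ` decreases (concavity of `log`), which gives
`p τ^(p-1) / log (1 + τ) ≤ (p t / log (1 + t)) τ^(p-2)`.
-/

open Real MeasureTheory

lemma log_one_add_div_self_antitoneOn : AntitoneOn (fun x : ℝ => log (1 + x) / x) (Ioi 0) := by
  intro τ (hτ : 0 < τ) t (ht : 0 < t) hτt
  rcases hτt.eq_or_lt with rfl | hτt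
  · rfl
  have h := strictConcaveOn_log_Ioi.secant_strict_mono (a := 1) (mem_Ioi.2 one_pos)
    (mem_Ioi.2 (by linarith : 0 < 1 + τ)) (mem_Ioi.2 (by linarith : 0 < 1 + t))
    (by simpa using hτ.ne') (by simpa using ht.ne') (by linarith)
  simpa using h.le

section

variable {p t : ℝ}

lemma rpow_div_log_le_mul_rpow (hp : 0 ≤ p) {τ : ℝ} (hτ : 0 < τ) (hτt : τ ≤ t) :
    p * τ ^ (p - 1) / log (1 + τ) ≤ p * t / log (1 + t) * τ ^ (p - 2) := by
  have hlog := log_pos (by linarith : 1 < 1 + τ)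
  have hpow : τ ^ (p - 1) = τ ^ (p - 2) * τ := by
    rw [← rpow_add_one hτ.ne']; ring_nf
  calc p * τ ^ (p - 1) / log (1 + τ) = p * τ ^ (p - 2) / (log (1 + τ) / τ) := by
        rw [hpow]; field_simp
    _ ≤ p * τ ^ (p - 2) / (log (1 + t) / t) := by
        have ht : 0 < t := hτ.trans_le hτt
        have := rpow_nonneg hτ.le (p - 2)
        exact div_le_div_of_nonneg_left (by positivity)
          (div_pos (log_pos (by linarith)) ht) (log_one_add_div_self_antitoneOn hτ ht hτt)
    _ = p * t / log (1 + t) * τ ^ (p - 2) := by field_simp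

lemma intervalIntegrable_rpow_div_log (hp : 1 < p) (ht : 0 < t) :
    IntervalIntegrable (fun τ => p * τ ^ (p - 1) / log (1 + τ)) volume 0 t := by
  have hbound : IntervalIntegrable (fun τ => p * t / log (1 + t) * τ ^ (p - 2)) volume 0 t :=
    (intervalIntegrable_rpow' (by linarith)).const_mul _
  refine hbound.mono_fun (Measurable.aestronglyMeasurable (by fun_prop)) ?_
  rw [uIoc_of_le ht.le]
  refine ae_restrict_of_forall_mem measurableSet_Ioc fun τ hτ => ?_
  have h0 : 0 ≤ p * τ ^ (p - 1) / log (1 + τ) := by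
    have := log_pos (by linarith [hτ.1] : 1 < 1 + τ)
    have := rpow_nonneg hτ.1.le (p - 1)
    positivity
  have h := rpow_div_log_le_mul_rpow (p := p) (by linarith) hτ.1 hτ.2
  simpa only [Real.norm_eq_abs, abs_of_nonneg h0, abs_of_nonneg (h0.trans h)] using h

lemma rpow_div_log_le_integral (hp : 1 < p) (ht : 0 < t) :
    t ^ p / log (1 + t) ≤ ∫ τ in 0..t, p * τ ^ (p - 1) / log (1 + τ) := by
  have hL := log_pos (by linarith : 1 < 1 + t)
  calc t ^ p / log (1 + t) = ∫ τ in 0..t, p / log (1 + t) * τ ^ (p - 1) := by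
        rw [intervalIntegral.integral_const_mul, integral_rpow (Or.inl (by linarith)), sub_add_cancel,
          zero_rpow (by linarith), sub_zero]
        field_simp
    _ ≤ ∫ τ in 0..t, p * τ ^ (p - 1) / log (1 + τ) := by
        refine integral_mono_on_of_le_Ioo ht.le
          ((intervalIntegrable_rpow' (by linarith)).const_mul _)
          (intervalIntegrable_rpow_div_log hp ht) fun τ hτ => ?_
        rw [div_mul_eq_mul_div]
        have := rpow_nonneg hτ.1.le (p - 1)
        exact div_le_div_of_nonneg_left (by positivity) (log_pos (by linarith [hτ.1]))
          (log_le_log (by linarith [hτ.1]) (by linarith [hτ.2]))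

lemma sub_one_mul_integral_le (hp : 1 < p) (ht : 0 < t) :
    (p - 1) * ∫ τ in 0..t, p * τ ^ (p - 1) / log (1 + τ) ≤ p * t ^ p / log (1 + t) := by
  have hL := log_pos (by linarith : 1 < 1 + t)
  have hp1 : p - 1 ≠ 0 := by linarith
  calc (p - 1) * ∫ τ in 0..t, p * τ ^ (p - 1) / log (1 + τ)
      ≤ (p - 1) * ∫ τ in 0..t, p * t / log (1 + t) * τ ^ (p - 2) := by
        refine mul_le_mul_of_nonneg_left (integral_mono_on_of_le_Ioo ht.le
          (intervalIntegrable_rpow_div_log hp ht)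
          ((intervalIntegrable_rpow' (by linarith)).const_mul _)
          fun τ hτ => rpow_div_log_le_mul_rpow (by linarith) hτ.1 hτ.2.le) (by linarith)
    _ = p * t ^ p / log (1 + t) := by
        rw [intervalIntegral.integral_const_mul, integral_rpow (Or.inl (by linarith)),
          show p - 2 + 1 = p - 1 by ring, zero_rpow hp1, sub_zero, rpow_sub_one ht.ne']
        field_simp

end

theorem stmt_10_general (p : ℝ) (hp : 2 ≤ p)
    (φ Φ : ℝ → ℝ)
    (hφ : ∀ t > (0:ℝ), φ t = p * t ^ (p - 1) / Real.log (1 + t))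
    (hΦ : ∀ t ≥ (0:ℝ), Φ t = ∫ τ in (0:ℝ)..t, φ τ) :
    ∀ t > (0:ℝ), p - 1 ≤ t * φ t / Φ t ∧ t * φ t / Φ t ≤ p := by
  intro t ht
  have hΦt : Φ t = ∫ τ in 0..t, p * τ ^ (p - 1) / log (1 + τ) := by
    rw [hΦ t ht.le]
    refine integral_congr_ae (ae_of_all _ fun τ hτ => hφ τ ?_)
    exact (uIoc_of_le ht.le ▸ hτ).1
  have htφ : t * φ t = p * t ^ p / log (1 + t) := by
    rw [hφ t ht, rpow_sub_one ht.ne']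
    field_simp
  have lower := rpow_div_log_le_integral (p := p) (by linarith) ht
  have upper := sub_one_mul_integral_le (p := p) (by linarith) ht
  have hΦpos : 0 < Φ t :=
    hΦt ▸ lt_of_lt_of_le (div_pos (rpow_pos_of_pos ht p) (log_pos (by linarith))) lower
  rw [← hΦt] at lower upper
  constructor
  · rwa [le_div_iff₀ hΦpos, htφ]
  · rw [div_le_iff₀ hΦpos, htφ, mul_div_assoc]
    gcongr

theorem stmt_10 (p : ℝ) (hp : 2 ≤ p)
    (φ Φ : ℝ → ℝ) (hφ0 : φ 0 = 0)
    (hφ : ∀ t > (0:ℝ), φ t = p * t ^ (p - 1) / Real.log (1 + t))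
    (hΦ : ∀ t ≥ (0:ℝ), Φ t = ∫ τ in (0:ℝ)..t, φ τ) :
    ∀ t > (0:ℝ), p - 1 ≤ t * φ t / Φ t ∧ t * φ t / Φ t ≤ p :=
  stmt_10_general p hp φ Φ hφ hΦ
end

section
/- Let Φ be convex differentiable with Φ(0)=0 and t ↦ Φ(√t) convex, with a(|t|)t = Φ'(|t|)·sgn(t). Then for all real numbers r, w: (a(|r|)r − a(|w|)w)(r − w) ≥ 4Φ(|r−w|/2). -/
open Set

theorem stmt_16 (Φ φ a : ℝ → ℝ)
    (hΦ0 : Φ 0 = 0)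
    (hconv : ConvexOn ℝ (Ici 0) Φ)
    (hderiv : ∀ t ∈ Ici (0:ℝ), HasDerivAt Φ (φ t) t)
    (hφa : ∀ t ≥ (0:ℝ), φ t = a t * t)
    (hφmono : StrictMonoOn φ (Ici 0))
    (hsq : ConvexOn ℝ (Ici 0) (fun t => Φ (Real.sqrt t))) :
    ∀ r w : ℝ, 4 * Φ (|r - w| / 2) ≤ (a |r| * r - a |w| * w) * (r - w) := by
  -- tangent line inequality for Φ on [0, ∞)
  have htan : ∀ u v : ℝ, 0 ≤ u → 0 ≤ v → Φ u + φ u * (v - u) ≤ Φ v := by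
    intro u v hu hv
    rcases lt_trichotomy u v with h | h | h
    · have hs := hconv.le_slope_of_hasDerivAt hu hv h (hderiv u hu)
      rw [slope_def_field] at hs
      have hpos : (0:ℝ) < v - u := by linarith
      have := mul_le_mul_of_nonneg_right hs hpos.le
      rw [div_mul_cancel₀] at this
      · linarith
      · exact hpos.ne'
    · subst h; simp
    · have hs := hconv.slope_le_of_hasDerivAt hv hu h (hderiv u hu)
      rw [slope_def_field] at hs
      have hpos : (0:ℝ) < u - v := by linarith
      have := mul_le_mul_of_nonneg_right hs hpos.le
      rw [div_mul_cancel₀] at this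
      · linarith
      · exact hpos.ne'
  have hφ0 : φ 0 = 0 := by simpa using hφa 0 le_rfl
  -- gradient inequality for F(t) = Φ |t|
  have hgrad : ∀ x y : ℝ, Φ |x| + a |x| * x * (y - x) ≤ Φ |y| := by
    intro x y
    have hx : (0:ℝ) ≤ |x| := abs_nonneg x
    have hy : (0:ℝ) ≤ |y| := abs_nonneg y
    have ht := htan |x| |y| hx hy
    rw [hφa |x| hx] at ht
    rcases eq_or_ne x 0 with rfl | hx0
    · simpa using ht
    · have hxpos : 0 < |x| := abs_pos.mpr hx0
      have hφpos : 0 < φ |x| := by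
        have := hφmono self_mem_Ici (mem_Ici.mpr hx) hxpos
        linarith
      have hapos : 0 < a |x| := by
        rw [hφa |x| hx] at hφpos
        nlinarith
      have hxy : x * y ≤ |x| * |y| := by
        calc x * y ≤ |x * y| := le_abs_self _
        _ = |x| * |y| := abs_mul x y
      have hsq : |x| * |x| = x * x := abs_mul_abs_self x
      nlinarith [mul_le_mul_of_nonneg_left hxy hapos.le]
  -- superadditivity of G(s) = Φ (√s)
  have hsup : ∀ p q : ℝ, 0 ≤ p → 0 ≤ q → Φ (Real.sqrt p) + Φ (Real.sqrt q) ≤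
      Φ (Real.sqrt (p + q)) := by
    intro p q hp hq
    rcases eq_or_lt_of_le (by linarith : (0:ℝ) ≤ p + q) with h0 | h0
    · have hp0 : p = 0 := by linarith
      have hq0 : q = 0 := by linarith
      simp [hp0, hq0, ← h0, Real.sqrt_zero, hΦ0]
    · have hs : (p + q) ∈ Ici (0:ℝ) := le_of_lt h0
      have h0' : (0:ℝ) ∈ Ici (0:ℝ) := self_mem_Ici
      have h1 : Φ (Real.sqrt p) ≤ (p / (p + q)) * Φ (Real.sqrt (p + q)) := by
        have := hsq.2 hs h0' (by positivity : 0 ≤ p / (p+q))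
          (by positivity : 0 ≤ q / (p+q)) (by field_simp)
        simp only [smul_eq_mul, Real.sqrt_zero, hΦ0, mul_zero, add_zero] at this
        rw [show p / (p + q) * (p + q) = p from by field_simp] at this
        exact this
      have h2 : Φ (Real.sqrt q) ≤ (q / (p + q)) * Φ (Real.sqrt (p + q)) := by
        have := hsq.2 hs h0' (by positivity : 0 ≤ q / (p+q))
          (by positivity : 0 ≤ p / (p+q)) (by field_simp; ring)
        simp only [smul_eq_mul, Real.sqrt_zero, hΦ0, mul_zero, add_zero] at this
        rw [show q / (p + q) * (p + q) = q from by field_simp] at this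
        exact this
      have hsum : (p / (p + q)) * Φ (Real.sqrt (p + q)) + (q / (p + q)) * Φ (Real.sqrt (p + q))
          = Φ (Real.sqrt (p + q)) := by field_simp
      linarith
  -- Clarkson-type inequality
  have hclark : ∀ r w : ℝ, Φ (|r + w| / 2) + Φ (|r - w| / 2) ≤ (Φ |r| + Φ |w|) / 2 := by
    intro r w
    have e1 : Real.sqrt (((r + w) / 2) ^ 2) = |r + w| / 2 := by
      rw [Real.sqrt_sq_eq_abs, abs_div]; norm_num
    have e2 : Real.sqrt (((r - w) / 2) ^ 2) = |r - w| / 2 := by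
      rw [Real.sqrt_sq_eq_abs, abs_div]; norm_num
    have h1 := hsup (((r + w) / 2) ^ 2) (((r - w) / 2) ^ 2) (by positivity) (by positivity)
    rw [e1, e2] at h1
    have e3 : ((r + w) / 2) ^ 2 + ((r - w) / 2) ^ 2 = (1/2 : ℝ) * r ^ 2 + (1/2 : ℝ) * w ^ 2 := by
      ring
    rw [e3] at h1
    have h2 := hsq.2 (mem_Ici.mpr (sq_nonneg r)) (mem_Ici.mpr (sq_nonneg w))
      (by norm_num : (0:ℝ) ≤ 1/2) (by norm_num : (0:ℝ) ≤ 1/2) (by norm_num)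
    simp only [smul_eq_mul] at h2
    rw [show Real.sqrt (r ^ 2) = |r| from Real.sqrt_sq_eq_abs r,
      show Real.sqrt (w ^ 2) = |w| from Real.sqrt_sq_eq_abs w] at h2
    linarith
  -- assemble
  intro r w
  have h1 := hgrad r ((r + w) / 2)
  have h2 := hgrad w ((r + w) / 2)
  have hm : |(r + w) / 2| = |r + w| / 2 := by rw [abs_div]; norm_num
  rw [hm] at h1 h2
  have hc := hclark r w
  nlinarith [h1, h2, hc]
end
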